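/- Let G be a fully residually free group containing an abelian subgroup of finite index. Then G is abelian. -/

import Mathlib

noncomputable section

universe u

/-- A group is fully residually free if for every finite subset `T` there is a homomorphism
to a finitely generated free group that is injective on `T`. -/
def IsFullyResiduallyFree (G : Type*) [Group G] : Prop :=
  ∀ T : Finset G, ∃ (m : ℕ) (f : G →* FreeGroup (Fin m)), Set.InjOn f (T : Set G)

/-! If `A` has finite index, any two elements `x`, `y` have commuting nonzero powers `x ^ m`,
`y ^ n`, and so do their images under every homomorphism to a free group. In a free group this
forces commutation: free groups are torsion-free, and commutation is transitive on nontrivial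
elements, because the centralizer of `g ≠ 1` is free (Nielsen–Schreier) with `g` central, and a
free group with nontrivial center has at most one generator. Separating `x * y` from `y * x` by a
homomorphism to a free group then gives `x * y = y * x`. -/

open Subgroup

namespace FreeGroup

variable {S : Type*}

theorem not_commute_of_ne {s t : S} (hst : s ≠ t) : ¬Commute (of s) (of t) := by
  classical
  intro h
  have := congrArg (lift fun x => if x = s then Equiv.swap (0 : Fin 3) 1 else Equiv.swap 1 2) h.eq
  simp only [_root_.map_mul, lift_apply_of, if_pos, if_neg hst.symm] at this
  exact absurd this (by decide)

instance [Subsingleton S] : IsCyclic (FreeGroup S) := by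
  cases isEmpty_or_nonempty S
  · infer_instance
  · have : Unique S := uniqueOfSubsingleton (Classical.arbitrary S)
    infer_instance

end FreeGroup

namespace IsFreeGroup

variable {G : Type*} [Group G] [IsFreeGroup G]

instance : IsMulTorsionFree G :=
  (toFreeGroup G).injective.isMulTorsionFree (toFreeGroup G).toMonoidHom

theorem isCyclic_of_isMulCommutative [IsMulCommutative G] : IsCyclic G := by
  have : Subsingleton (Generators G) := ⟨fun s t => by
    by_contra hst
    refine FreeGroup.not_commute_of_ne hst ?_
    simpa [Commute, SemiconjBy] using congrArg (toFreeGroup G)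
      (mul_comm' ((toFreeGroup G).symm (.of s)) ((toFreeGroup G).symm (.of t)))⟩
  exact (toFreeGroup G).isCyclic.mpr inferInstance

theorem exists_mem_zpowers_of_commute {a b : G} (h : Commute a b) :
    ∃ c : G, a ∈ zpowers c ∧ b ∈ zpowers c := by
  set H := closure ({a, b} : Set G)
  have : IsMulCommutative H := isMulCommutative_closure <| by
    rintro x (rfl | rfl) y (rfl | rfl) <;> first | rfl | exact h.eq | exact h.eq.symm
  obtain ⟨c, hc⟩ := (isCyclic_of_isMulCommutative (G := H)).exists_generator
  have mem : ∀ x ∈ H, x ∈ zpowers (c : G) := fun x hx => by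
    obtain ⟨n, hn⟩ := hc ⟨x, hx⟩
    exact ⟨n, by simpa using congrArg Subtype.val hn⟩
  exact ⟨c, mem a (subset_closure (by simp)), mem b (subset_closure (by simp))⟩

end IsFreeGroup

namespace FreeGroup

variable {S : Type*}

theorem mem_zpowers_of_commute_of {w : FreeGroup S} {s : S} (h : Commute w (of s)) :
    w ∈ zpowers (of s) := by
  classical
  obtain ⟨c, ⟨m, rfl⟩, ⟨i, hi⟩⟩ := IsFreeGroup.exists_mem_zpowers_of_commute h
  -- `of s` is primitive: counting its occurrences shows `i = ± 1`
  have hi_unit : IsUnit i := by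
    have := congrArg (fun x => (lift (Pi.mulSingle s (Multiplicative.ofAdd (1 : ℤ))) x).toAdd) hi
    simp only [map_zpow, toAdd_zpow, lift_apply_of, Pi.mulSingle_eq_same, toAdd_ofAdd,
      smul_eq_mul] at this
    exact IsUnit.of_mul_eq_one _ this
  refine ⟨i * m, ?_⟩
  simp only [← hi, ← zpow_mul, ← mul_assoc, Int.isUnit_mul_self hi_unit, one_mul]

theorem subsingleton_of_mem_center {w : FreeGroup S} (hw : w ≠ 1)
    (hc : w ∈ center (FreeGroup S)) : Subsingleton S := by
  classical
  refine ⟨fun s t => by_contra fun hst => hw ?_⟩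
  have hcomm (r : S) : Commute w (of r) := (mem_center_iff.mp hc (of r)).symm
  obtain ⟨p, rfl⟩ := mem_zpowers_of_commute_of (hcomm s)
  obtain ⟨q, hq⟩ := mem_zpowers_of_commute_of (hcomm t)
  have := congrArg (fun x => (lift (Pi.mulSingle s (Multiplicative.ofAdd (1 : ℤ))) x).toAdd) hq
  simp only [map_zpow, lift_apply_of, Pi.mulSingle_eq_of_ne (Ne.symm hst), one_zpow, toAdd_one,
    Pi.mulSingle_eq_same, toAdd_zpow, toAdd_ofAdd, Int.zsmul_eq_mul, mul_one] at this
  simp only [← this, zpow_zero]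

end FreeGroup

namespace IsFreeGroup

variable {G : Type*} [Group G] [IsFreeGroup G]

theorem isMulCommutative_of_mem_center {g : G} (hg : g ≠ 1) (hc : g ∈ center G) :
    IsMulCommutative G := by
  have := FreeGroup.subsingleton_of_mem_center (w := toFreeGroup G g) (by simpa) <|
    mem_center_iff.mpr fun x => by
      simpa using congrArg (toFreeGroup G) (mem_center_iff.mp hc ((toFreeGroup G).symm x))
  have := (toFreeGroup G).isCyclic.mpr inferInstance
  infer_instance

theorem isMulCommutative_centralizer {g : G} (hg : g ≠ 1) :
    IsMulCommutative (centralizer {g}) :=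
  isMulCommutative_of_mem_center (g := ⟨g, mem_centralizer_singleton_iff.mpr rfl⟩)
    (by simpa using hg)
    (mem_center_iff.mpr fun x => Subtype.ext (mem_centralizer_singleton_iff.mp x.2))

theorem commute_trans {g x y : G} (hg : g ≠ 1) (hxg : Commute x g) (hgy : Commute g y) :
    Commute x y := by
  have := isMulCommutative_centralizer hg
  have hx : x ∈ centralizer {g} := mem_centralizer_singleton_iff.mpr hxg
  have hy : y ∈ centralizer {g} := mem_centralizer_singleton_iff.mpr hgy.symm
  exact congrArg Subtype.val (mul_comm' (⟨x, hx⟩ : centralizer {g}) ⟨y, hy⟩)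

theorem commute_of_commute_pow {x y : G} {m n : ℕ} (hm : m ≠ 0) (hn : n ≠ 0)
    (h : Commute (x ^ m) (y ^ n)) : Commute x y := by
  rcases eq_or_ne x 1 with rfl | hx
  · exact Commute.one_left y
  rcases eq_or_ne y 1 with rfl | hy
  · exact Commute.one_right x
  have hxyn : Commute x (y ^ n) :=
    commute_trans ((pow_eq_one_iff_left hm).not.mpr hx) (Commute.self_pow x m) h
  exact commute_trans ((pow_eq_one_iff_left hn).not.mpr hy) hxyn (Commute.pow_self y n)

end IsFreeGroup

theorem IsFullyResiduallyFree.commute_of_commute_pow {G : Type*} [Group G]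
    (hG : IsFullyResiduallyFree G) {x y : G} {m n : ℕ} (hm : m ≠ 0) (hn : n ≠ 0)
    (h : Commute (x ^ m) (y ^ n)) : Commute x y := by
  classical
  obtain ⟨k, f, hf⟩ := hG {x * y, y * x}
  have : Commute (f x) (f y) :=
    IsFreeGroup.commute_of_commute_pow hm hn (by simpa only [map_pow] using h.map f)
  exact hf (by simp) (by simp) (by simpa only [map_mul] using this.eq)

/-- A fully residually free group with an abelian subgroup of finite index is abelian. -/
theorem fully_residually_free_virtually_abelian_is_abelian
    (G : Type u) [Group G] (hG : IsFullyResiduallyFree G)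
    (A : Subgroup G) (hA : A.FiniteIndex)
    (hab : ∀ x ∈ A, ∀ y ∈ A, x * y = y * x) :
    ∀ x y : G, x * y = y * x := by
  intro x y
  obtain ⟨m, hm, -, hxm⟩ := A.exists_pow_mem_of_index_ne_zero hA.index_ne_zero x
  obtain ⟨n, hn, -, hyn⟩ := A.exists_pow_mem_of_index_ne_zero hA.index_ne_zero y
  exact hG.commute_of_commute_pow hm.ne' hn.ne' (hab _ hxm _ hyn)
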